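/- For every integer n ≥ 3, one has k_n > k_n^−, where k_n^− = (1/(4π))·ln((1+cos(π/n))/(1−cos(π/n))) + 1/(4n·sin(π/n)). -/

import Mathlib

/-- `k_n = (1/(4n)) · Σ_{k=1}^{n-1} 1/sin(kπ/n)` -/
noncomputable def kn (n : ℕ) : ℝ :=
  (1 / (4 * n)) * ∑ k ∈ Finset.Icc 1 (n - 1), 1 / Real.sin (k * Real.pi / n)

/-- `k_n^− = (1/(4π))·ln((1+cos(π/n))/(1−cos(π/n))) + 1/(4n·sin(π/n))` -/
noncomputable def knMinus (n : ℕ) : ℝ :=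
  (1 / (4 * Real.pi)) *
      Real.log ((1 + Real.cos (Real.pi / n)) / (1 - Real.cos (Real.pi / n))) +
    1 / (4 * n * Real.sin (Real.pi / n))

/-!
Since `1 / sin` is strictly convex on `(0, π)`, the trapezoidal rule with nodes `kπ/n`,
`1 ≤ k ≤ n - 1`, strictly overestimates `∫_{π/n}^{π - π/n} dx / sin x`, which equals
`log ((1 + cos (π/n)) / (1 - cos (π/n)))`. The two end nodes carry the same value `1 / sin (π/n)`,
so the trapezoidal sum is `(π/n) (∑_{k=1}^{n-1} 1 / sin (kπ/n) - 1 / sin (π/n))`; dividing by `4π`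
gives `k_n^− < k_n`.
-/

open Set Finset

theorem StrictConvexOn.integral_lt_trapezoid {f : ℝ → ℝ} {a b : ℝ} (hab : a < b)
    (hf : StrictConvexOn ℝ (Icc a b) f) (hfc : ContinuousOn f (Icc a b)) :
    ∫ x in a..b, f x < (b - a) / 2 * (f a + f b) := by
  set s := (f b - f a) / (b - a)
  have hba : b - a ≠ 0 := (sub_pos.2 hab).ne'
  have hchord : (∫ x in a..b, f a + s * (x - a)) = (b - a) / 2 * (f a + f b) := by
    rw [intervalIntegral.integral_add intervalIntegrable_const
        ((by fun_prop : Continuous fun x => s * (x - a)).intervalIntegrable _ _),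
      intervalIntegral.integral_const_mul, intervalIntegral.integral_comp_sub_right (fun x => x)]
    simp only [s, intervalIntegral.integral_const, integral_id, smul_eq_mul]
    field_simp
    ring
  have hle : ∀ x ∈ Ioc a b, f x ≤ f a + s * (x - a) := by
    intro x hx
    have hconv := hf.convexOn.2 (left_mem_Icc.2 hab.le) (right_mem_Icc.2 hab.le)
      (div_nonneg (sub_nonneg.2 hx.2) (sub_pos.2 hab).le)
      (div_nonneg (sub_nonneg.2 hx.1.le) (sub_pos.2 hab).le) (by field_simp; ring)
    have hx' : ((b - x) / (b - a)) • a + ((x - a) / (b - a)) • b = x := by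
      simp only [smul_eq_mul]; field_simp; ring
    calc f x ≤ _ := hx' ▸ hconv
      _ = f a + s * (x - a) := by simp only [s, smul_eq_mul]; field_simp; ring
  have hmid : f ((a + b) / 2) < f a + s * ((a + b) / 2 - a) := by
    have hconv := hf.2 (left_mem_Icc.2 hab.le) (right_mem_Icc.2 hab.le) hab.ne
      one_half_pos one_half_pos (add_halves 1)
    calc f ((a + b) / 2) = f ((1 / 2 : ℝ) • a + (1 / 2 : ℝ) • b) := by
          congr 1; simp only [smul_eq_mul]; ring
      _ < _ := hconv
      _ = f a + s * ((a + b) / 2 - a) := by simp only [s, smul_eq_mul]; field_simp; ring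
  rw [← hchord]
  exact intervalIntegral.integral_lt_integral_of_continuousOn_of_le_of_exists_lt hab hfc
    (by fun_prop) hle ⟨_, ⟨by linarith, by linarith⟩, hmid⟩

theorem StrictConvexOn.integral_lt_sum_trapezoid {f : ℝ → ℝ} {a h : ℝ} {N : ℕ} (hN : 0 < N)
    (hh : 0 < h) (hf : StrictConvexOn ℝ (Icc a (a + N * h)) f)
    (hfc : ContinuousOn f (Icc a (a + N * h))) :
    ∫ x in a..a + N * h, f x < ∑ i ∈ range N, h / 2 * (f (a + i * h) + f (a + (i + 1) * h)) := by
  have hcell : ∀ i < N, Icc (a + i * h) (a + (i + 1) * h) ⊆ Icc a (a + N * h) := by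
    intro i hi
    have hi : (i : ℝ) + 1 ≤ N := by exact_mod_cast hi
    exact Icc_subset_Icc (by nlinarith [i.cast_nonneg (α := ℝ)]) (by gcongr)
  have hstep : ∀ i < N, ∫ x in a + i * h..a + (i + 1) * h, f x
      < h / 2 * (f (a + i * h) + f (a + (i + 1) * h)) := by
    intro i hi
    convert (hf.subset (hcell i hi) (convex_Icc _ _)).integral_lt_trapezoid
      (by linarith) (hfc.mono (hcell i hi)) using 2
    ring
  have hsum := intervalIntegral.sum_integral_adjacent_intervals (f := f)
    (a := fun i : ℕ => a + i * h) (n := N) (μ := MeasureTheory.volume) fun i hi => by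
      simpa using (hfc.mono (hcell i hi)).intervalIntegrable_of_Icc (by linarith)
  simp only [Nat.cast_zero, zero_mul, add_zero, Nat.cast_add_one] at hsum
  rw [← hsum]
  exact sum_lt_sum_of_nonempty (nonempty_range_iff.2 hN.ne') fun i hi => hstep i (mem_range.1 hi)

theorem Finset.sum_range_consecutive_pairs (f : ℕ → ℝ) (N : ℕ) :
    ∑ i ∈ range N, (f (i + 1) + f (i + 2)) = 2 * ∑ k ∈ Icc 1 (N + 1), f k - f 1 - f (N + 1) := by
  have hIcc : ∑ k ∈ Icc 1 (N + 1), f k = ∑ i ∈ range (N + 1), f (i + 1) := by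
    rw [range_eq_Ico, sum_Ico_add' (c := 1)]
    rfl
  have hlast := sum_range_succ (fun i => f (i + 1)) N
  have hfirst := sum_range_succ' (fun i => f (i + 1)) N
  rw [sum_add_distrib]
  linarith

namespace Real

theorem continuousOn_inv_sin : ContinuousOn (fun x => (sin x)⁻¹) (Ioo 0 π) :=
  continuousOn_sin.inv₀ fun _ hx => (sin_pos_of_pos_of_lt_pi hx.1 hx.2).ne'

theorem strictConvexOn_inv_sin : StrictConvexOn ℝ (Ioo 0 π) fun x => (sin x)⁻¹ := by
  have hpos : sin '' Ioo 0 π ⊆ Ioi 0 := by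
    rintro _ ⟨x, hx, rfl⟩
    exact sin_pos_of_pos_of_lt_pi hx.1 hx.2
  have hinv : ConvexOn ℝ (Ioi 0) fun y : ℝ => y⁻¹ := by
    simpa only [zpow_neg_one] using
      (strictConvexOn_zpow (m := -1) (by norm_num) (by norm_num)).convexOn
  exact (hinv.subset hpos (isPreconnected_Ioo.image _ continuousOn_sin).convex).comp_strictConcaveOn
    (strictConcaveOn_sin_Icc.subset Ioo_subset_Icc_self (convex_Ioo 0 π))
    (strictAntiOn_inv_pos.mono hpos)

-- The antiderivative is `log (tan (x / 2))`.
theorem hasDerivAt_log_one_sub_cos_sub_log_one_add_cos {x : ℝ} (hx : x ∈ Ioo 0 π) :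
    HasDerivAt (fun y => (log (1 - cos y) - log (1 + cos y)) / 2) (sin x)⁻¹ x := by
  have hsin : 0 < sin x := sin_pos_of_pos_of_lt_pi hx.1 hx.2
  have hcos : cos x ^ 2 < 1 := by nlinarith [sin_sq_add_cos_sq x]
  have hsub : 0 < 1 - cos x := by nlinarith
  have hadd : 0 < 1 + cos x := by nlinarith
  have hderiv := ((((hasDerivAt_cos x).const_sub 1).log hsub.ne').sub
    (((hasDerivAt_cos x).const_add 1).log hadd.ne')).div_const 2
  refine hderiv.congr_deriv ?_
  field_simp
  nlinarith [sin_sq_add_cos_sq x]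

theorem integral_inv_sin_pi_sub {θ : ℝ} (hθ : θ ∈ Ioo 0 π) :
    ∫ x in θ..π - θ, (sin x)⁻¹ = log ((1 + cos θ) / (1 - cos θ)) := by
  have huIcc : uIcc θ (π - θ) ⊆ Ioo 0 π :=
    ordConnected_Ioo.uIcc_subset hθ ⟨by linarith [hθ.2], by linarith [hθ.1]⟩
  rw [intervalIntegral.integral_eq_sub_of_hasDerivAt
    (fun x hx => hasDerivAt_log_one_sub_cos_sub_log_one_add_cos (huIcc hx))
    ((continuousOn_inv_sin.mono huIcc).intervalIntegrable)]
  have hsin : 0 < sin θ := sin_pos_of_pos_of_lt_pi hθ.1 hθ.2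
  have hsub : 0 < 1 - cos θ := by nlinarith [sin_sq_add_cos_sq θ]
  have hadd : 0 < 1 + cos θ := by nlinarith [sin_sq_add_cos_sq θ]
  rw [cos_pi_sub, sub_neg_eq_add, ← sub_eq_add_neg, log_div hadd.ne' hsub.ne']
  ring

theorem log_lt_pi_div_mul_sum_inv_sin {n : ℕ} (hn : 3 ≤ n) :
    log ((1 + cos (π / n)) / (1 - cos (π / n)))
      < π / n * (∑ k ∈ Icc 1 (n - 1), (sin (k * π / n))⁻¹ - (sin (π / n))⁻¹) := by
  obtain ⟨N, rfl⟩ : ∃ N, n = N + 2 := ⟨n - 2, by omega⟩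
  set θ := π / (N + 2 : ℕ)
  have hθ : θ ∈ Ioo 0 π := ⟨by positivity, div_lt_self pi_pos (by norm_cast; omega)⟩
  have hend : θ + N * θ = π - θ := by
    simp only [θ]; field_simp; push_cast; ring
  have hnodes : ∀ i : ℕ, θ + i * θ = (i + 1 : ℕ) * π / (N + 2 : ℕ) := by
    intro i; simp only [θ]; push_cast; ring
  have hfirst : sin ((1 : ℕ) * π / (N + 2 : ℕ)) = sin θ := by rw [Nat.cast_one, one_mul]
  have hlast : sin ((N + 1 : ℕ) * π / (N + 2 : ℕ)) = sin θ := by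
    rw [← hnodes N, hend, sin_pi_sub]
  have hsub : Icc θ (θ + N * θ) ⊆ Ioo 0 π := hend ▸ Icc_subset_Ioo hθ.1 (by linarith [hθ.1])
  have htrap := (strictConvexOn_inv_sin.subset hsub (convex_Icc _ _)).integral_lt_sum_trapezoid
    (by omega) hθ.1 (continuousOn_inv_sin.mono hsub)
  rw [hend, integral_inv_sin_pi_sub hθ, ← mul_sum] at htrap
  simp only [hnodes, ← Nat.cast_add_one] at htrap
  rw [sum_range_consecutive_pairs (fun k : ℕ => (sin (k * π / (N + 2 : ℕ)))⁻¹), hfirst,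
    hlast] at htrap
  rw [show N + 2 - 1 = N + 1 from rfl]
  linarith

end Real

theorem kn_gt_knMinus (n : ℕ) (hn : 3 ≤ n) : kn n > knMinus n := by
  have hn0 : (0 : ℝ) < n := by exact_mod_cast (by omega : 0 < n)
  have hlog := mul_lt_mul_of_pos_left (Real.log_lt_pi_div_mul_sum_inv_sin hn)
    (by positivity : 0 < 1 / (4 * Real.pi))
  have hscale : ∀ x : ℝ, 1 / (4 * Real.pi) * (Real.pi / n * x) = 1 / (4 * n) * x := by
    intro x; field_simp
  rw [hscale] at hlog
  simp only [kn, knMinus, one_div, gt_iff_lt] at hlog ⊢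
  rw [mul_inv (4 * (n : ℝ))]
  linarith
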